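/- Let k and l be positive integers. Then the function φ̃ satisfies φ̃'''(x) + φ̃'(x) + i·λ·φ̃(x) = 0 for every x ∈ ℝ and φ̃(0) = φ̃(L) = 0. Moreover, if 2k + l is divisible by 3, then φ̃'(0) = φ̃'(L) = i·√3·(k+l)/√n, which is nonzero. -/

import Mathlib

noncomputable section

/-- `n = k² + k·l + l²` as a real number. -/
def nR (k l : ℕ) : ℝ := ((k ^ 2 + k * l + l ^ 2 : ℕ) : ℝ)

/-- The critical length `L = 2π√(n/3)`. -/
def LL (k l : ℕ) : ℝ := 2 * Real.pi * Real.sqrt (nR k l / 3)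

/-- `λ = (2k+l)(k−l)(2l+k)/(3√3 n^{3/2})`. -/
def lam (k l : ℕ) : ℝ :=
  ((2 * k + l : ℕ) : ℝ) * ((k : ℝ) - (l : ℝ)) * ((2 * l + k : ℕ) : ℝ) /
    (3 * Real.sqrt 3 * nR k l ^ ((3 : ℝ) / 2))

/-- The Type 1 eigenfunction `φ`. -/
def phi (k l : ℕ) : ℝ → ℂ := fun x =>
  -Complex.exp (Complex.I *
      ((x * (Real.sqrt 3 * ((2 * k + l : ℕ) : ℝ)) / (3 * Real.sqrt (nR k l)) : ℝ) : ℂ))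
  - ((k : ℂ) / (l : ℂ)) * Complex.exp (-(Complex.I *
      ((x * (Real.sqrt 3 * ((k + 2 * l : ℕ) : ℝ)) / (3 * Real.sqrt (nR k l)) : ℝ) : ℂ)))
  + (((k : ℂ) + (l : ℂ)) / (l : ℂ)) * Complex.exp (Complex.I *
      ((x * (Real.sqrt 3 * ((l : ℝ) - (k : ℝ))) / (3 * Real.sqrt (nR k l)) : ℝ) : ℂ))

/-- The Type 2 eigenfunction `φ̃`. -/
def phiT (k l : ℕ) : ℝ → ℂ := fun x =>
  Complex.exp (Complex.I *
      ((x * (Real.sqrt 3 * ((2 * k + l : ℕ) : ℝ)) / (3 * Real.sqrt (nR k l)) : ℝ) : ℂ))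
  - Complex.exp (-(Complex.I *
      ((x * (Real.sqrt 3 * ((k + 2 * l : ℕ) : ℝ)) / (3 * Real.sqrt (nR k l)) : ℝ) : ℂ)))

end


/-!
With `ρ = √(3n)`, `φ̃(x) = e^{iαx} - e^{-iβx}` where `α = (2k+l)/ρ` and `β = (k+2l)/ρ`.
Since `ρ² = 3(k² + kl + l²)`, a direct computation gives `α³ - α = λ = (-β)³ - (-β)`, so `iα` and
`-iβ` are both roots of the characteristic polynomial `z³ + z + iλ` of the ODE.
As `L/ρ = 2π/3`, the phases at `x = L` are `αL = 2π(2k+l)/3` and `βL = 2π(k+2l)/3`: they differ by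
`2π(k+l)`, which gives `φ̃(L) = 0`, and both are multiples of `2π` when `3 ∣ 2k+l`, so that
`φ̃'(L) = φ̃'(0) = i(α+β)`.
-/

open Complex Real

noncomputable def rho (k l : ℕ) : ℝ := √3 * √(nR k l)

noncomputable def expPair (p q a b : ℂ) (x : ℝ) : ℂ := p * cexp (a * x) + q * cexp (b * x)

theorem hasDerivAt_expPair (p q a b : ℂ) (x : ℝ) :
    HasDerivAt (expPair p q a b) (expPair (p * a) (q * b) a b x) x := by
  have hexp (c : ℂ) : HasDerivAt (fun t : ℝ => cexp (c * t)) (cexp (c * x) * c) x := by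
    have hlin : HasDerivAt (fun t : ℝ => c * (t : ℂ)) c x := by
      simpa using (hasDerivAt_id x).ofReal_comp.const_mul c
    exact hlin.cexp
  refine (((hexp a).const_mul p).add ((hexp b).const_mul q)).congr_deriv ?_
  unfold expPair; ring

theorem deriv_expPair (p q a b : ℂ) : deriv (expPair p q a b) = expPair (p * a) (q * b) a b :=
  funext fun x => (hasDerivAt_expPair p q a b x).deriv

theorem expPair_deriv_three_add_deriv {p q a b c : ℂ} (ha : a ^ 3 + a + c = 0)
    (hb : b ^ 3 + b + c = 0) (x : ℝ) :
    deriv (deriv (deriv (expPair p q a b))) x + deriv (expPair p q a b) x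
      + c * expPair p q a b x = 0 := by
  simp only [deriv_expPair, expPair]
  linear_combination p * cexp (a * x) * ha + q * cexp (b * x) * hb

theorem ofReal_mul_I_pow_three_add {u μ : ℝ} (h : u ^ 3 - u = μ) :
    ((u : ℂ) * I) ^ 3 + u * I + I * μ = 0 := by
  have hC : (u : ℂ) ^ 3 - u = μ := by exact_mod_cast h
  linear_combination -I * hC + (u : ℂ) ^ 3 * I * I_sq

theorem div_pow_three_sub_div {a b r : ℝ} (hr : r ≠ 0) (h : r ^ 2 = 3 * (a ^ 2 + a * b + b ^ 2)) :
    ((2 * a + b) / r) ^ 3 - (2 * a + b) / r = (2 * a + b) * (a - b) * (a + 2 * b) / r ^ 3 := by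
  field_simp
  linear_combination -(2 * a + b) * h

theorem nR_eq (k l : ℕ) : nR k l = (k : ℝ) ^ 2 + k * l + l ^ 2 := by
  simp [nR]

theorem nR_pos {k : ℕ} (hk : 0 < k) (l : ℕ) : 0 < nR k l := by
  rw [nR_eq]; positivity

theorem rho_sq (k l : ℕ) : rho k l ^ 2 = 3 * ((k : ℝ) ^ 2 + k * l + l ^ 2) := by
  rw [rho, mul_pow, sq_sqrt (by norm_num), sq_sqrt (by rw [nR_eq]; positivity), nR_eq]

theorem rho_pos {k : ℕ} (hk : 0 < k) (l : ℕ) : 0 < rho k l :=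
  mul_pos (by positivity) (sqrt_pos.mpr (nR_pos hk l))

theorem lam_eq (k l : ℕ) :
    lam k l = (2 * k + l) * ((k : ℝ) - l) * (k + 2 * l) / rho k l ^ 3 := by
  have hn : 0 ≤ nR k l := by rw [nR_eq]; positivity
  have hpow : nR k l ^ ((3 : ℝ) / 2) = √(nR k l) ^ 3 := by
    rw [sqrt_eq_rpow, ← rpow_natCast, ← rpow_mul hn]; norm_num
  have h3 : (√3 : ℝ) ^ 3 = 3 * √3 := by
    rw [pow_succ, sq_sqrt (by norm_num)]
  rw [lam, hpow, rho, mul_pow, h3]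
  push_cast; ring

theorem div_rho (k l : ℕ) (m : ℝ) : m / rho k l = √3 * m / (3 * √(nR k l)) := by
  have h3 : √3 * m / 3 = m / √3 := by
    field_simp
    rw [sq_sqrt (by norm_num), mul_comm]
  rw [← div_div, h3, div_div, rho]

theorem phiT_eq_expPair (k l : ℕ) :
    phiT k l = expPair 1 (-1) ((((2 * k + l) / rho k l : ℝ) : ℂ) * I)
      (((-(k + 2 * l) / rho k l : ℝ) : ℂ) * I) := by
  funext x
  simp only [phiT, expPair]
  rw [mul_div_assoc, ← div_rho, mul_div_assoc, ← div_rho]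
  push_cast
  ring_nf

theorem phiT_deriv_three_add_deriv {k : ℕ} (hk : 0 < k) (l : ℕ) (x : ℝ) :
    deriv (deriv (deriv (phiT k l))) x + deriv (phiT k l) x
      + I * ((lam k l : ℝ) : ℂ) * phiT k l x = 0 := by
  have hρ : rho k l ≠ 0 := (rho_pos hk l).ne'
  have hα : ((2 * k + l) / rho k l) ^ 3 - (2 * k + l) / rho k l = lam k l := by
    rw [lam_eq]; exact div_pow_three_sub_div hρ (rho_sq k l)
  have hβ : (-(k + 2 * l) / rho k l) ^ 3 - (-(k + 2 * l) / rho k l) = lam k l := by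
    have h := div_pow_three_sub_div (a := l) (b := k) hρ (by rw [rho_sq]; ring)
    rw [lam_eq]; linear_combination -h
  rw [phiT_eq_expPair]
  exact expPair_deriv_three_add_deriv (ofReal_mul_I_pow_three_add hα)
    (ofReal_mul_I_pow_three_add hβ) x

theorem LL_div_rho {k : ℕ} (hk : 0 < k) (l : ℕ) : LL k l / rho k l = 2 * π / 3 := by
  have hn := sqrt_pos.mpr (nR_pos hk l)
  rw [LL, rho, sqrt_div (nR_pos hk l).le]
  field_simp
  rw [sq_sqrt (by norm_num)]

theorem cexp_three_mul_div_rho_mul_LL {k : ℕ} (hk : 0 < k) (l : ℕ) (m : ℤ) :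
    cexp (((3 * m / rho k l : ℝ) : ℂ) * I * LL k l) = 1 := by
  have h : 3 * m / rho k l * LL k l = m * (2 * π) := by
    rw [div_mul_eq_mul_div, mul_div_assoc, LL_div_rho hk]; ring
  have hC : ((3 * m / rho k l : ℝ) : ℂ) * I * LL k l = m * (2 * π * I) := by
    rw [mul_right_comm, ← ofReal_mul, h]; push_cast; ring
  rw [hC, exp_int_mul_two_pi_mul_I]

theorem phiT_LL {k : ℕ} (hk : 0 < k) (l : ℕ) : phiT k l (LL k l) = 0 := by
  have hfreq : ((2 * k + l) / rho k l : ℝ)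
      = -(k + 2 * l) / rho k l + 3 * (((k + l : ℕ) : ℤ) : ℝ) / rho k l := by
    push_cast; ring
  rw [phiT_eq_expPair, expPair, hfreq, ofReal_add, add_mul, add_mul, Complex.exp_add,
    cexp_three_mul_div_rho_mul_LL hk]
  ring

theorem deriv_phiT_zero (k l : ℕ) :
    deriv (phiT k l) 0 = I * ((√3 * ((k : ℝ) + l) / √(nR k l) : ℝ) : ℂ) := by
  have hsum : (2 * k + l) / rho k l - -(k + 2 * l) / rho k l
      = √3 * ((k : ℝ) + l) / √(nR k l) := by
    rw [← sub_div, div_rho]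
    field_simp
    ring
  rw [phiT_eq_expPair, deriv_expPair, expPair]
  simp only [ofReal_zero, mul_zero, Complex.exp_zero, mul_one, ← hsum]
  push_cast; ring

theorem deriv_phiT_LL {k l : ℕ} (hk : 0 < k) (h : 3 ∣ 2 * k + l) :
    deriv (phiT k l) (LL k l) = deriv (phiT k l) 0 := by
  obtain ⟨m, hm⟩ := h
  have hmR : (2 * k + l : ℝ) = 3 * m := by exact_mod_cast hm
  have hα : ((2 * k + l) / rho k l : ℝ) = 3 * ((m : ℤ) : ℝ) / rho k l := by
    rw [hmR]; push_cast; ring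
  have hβ : (-(k + 2 * l) / rho k l : ℝ) = 3 * (((m : ℤ) - k - l : ℤ) : ℝ) / rho k l := by
    push_cast; linear_combination hmR / rho k l
  rw [phiT_eq_expPair, deriv_expPair, expPair, expPair, hα, hβ,
    cexp_three_mul_div_rho_mul_LL hk, cexp_three_mul_div_rho_mul_LL hk]
  simp

theorem stmt_5_general (k l : ℕ) (hk : 0 < k) :
    (∀ x : ℝ, deriv (deriv (deriv (phiT k l))) x + deriv (phiT k l) x
        + Complex.I * ((lam k l : ℝ) : ℂ) * phiT k l x = 0) ∧
    phiT k l 0 = 0 ∧ phiT k l (LL k l) = 0 ∧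
    (3 ∣ 2 * k + l →
      deriv (phiT k l) 0 =
        Complex.I * ((Real.sqrt 3 * ((k : ℝ) + (l : ℝ)) / Real.sqrt (nR k l) : ℝ) : ℂ) ∧
      deriv (phiT k l) (LL k l) =
        Complex.I * ((Real.sqrt 3 * ((k : ℝ) + (l : ℝ)) / Real.sqrt (nR k l) : ℝ) : ℂ) ∧
      Complex.I * ((Real.sqrt 3 * ((k : ℝ) + (l : ℝ)) / Real.sqrt (nR k l) : ℝ) : ℂ) ≠ 0) := by
  have hslope : (√3 * ((k : ℝ) + l) / √(nR k l)) ≠ 0 :=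
    div_ne_zero (mul_ne_zero (by positivity) (by positivity)) (sqrt_pos.mpr (nR_pos hk l)).ne'
  refine ⟨phiT_deriv_three_add_deriv hk l, by simp [phiT], phiT_LL hk l, fun h => ?_⟩
  exact ⟨deriv_phiT_zero k l, (deriv_phiT_LL hk h).trans (deriv_phiT_zero k l),
    mul_ne_zero I_ne_zero (ofReal_ne_zero.mpr hslope)⟩

theorem stmt_5 (k l : ℕ) (hk : 0 < k) (hl : 0 < l) :
    (∀ x : ℝ, deriv (deriv (deriv (phiT k l))) x + deriv (phiT k l) x
        + Complex.I * ((lam k l : ℝ) : ℂ) * phiT k l x = 0) ∧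
    phiT k l 0 = 0 ∧ phiT k l (LL k l) = 0 ∧
    (3 ∣ 2 * k + l →
      deriv (phiT k l) 0 =
        Complex.I * ((Real.sqrt 3 * ((k : ℝ) + (l : ℝ)) / Real.sqrt (nR k l) : ℝ) : ℂ) ∧
      deriv (phiT k l) (LL k l) =
        Complex.I * ((Real.sqrt 3 * ((k : ℝ) + (l : ℝ)) / Real.sqrt (nR k l) : ℝ) : ℂ) ∧
      Complex.I * ((Real.sqrt 3 * ((k : ℝ) + (l : ℝ)) / Real.sqrt (nR k l) : ℝ) : ℂ) ≠ 0) :=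
  stmt_5_general k l hk
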